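/- For any probability distributions p and q on [n], the expected cost of guesswork under mismatch satisfies δ(p,q) ≤ Σ_{(i,j) : p_i > p_j} (p_i − p_j), where the sum is over ordered pairs (i,j) ∈ [n] × [n] with p_i > p_j; equivalently, δ(p,q) ≤ (1/2) Σ_{i=1}^n Σ_{j=1}^n |p_i − p_j|. -/
import Mathlib


open Finset

/-- `p` is a probability distribution on `Fin n` (representing `[n] = {1,…,n}`). -/
def IsDist {n : ℕ} (p : Fin n → ℝ) : Prop :=
  (∀ i, 0 ≤ p i) ∧ ∑ i, p i = 1

/-- The guesswork `E_p[G] = Σ_i p_i · G(i)`, where the guessing function `G`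
takes values in `{1,…,n}` (hence the `+ 1` on the `Fin n` value). -/
noncomputable def guesswork {n : ℕ} (p : Fin n → ℝ) (G : Equiv.Perm (Fin n)) : ℝ :=
  ∑ i, p i * (((G i : ℕ) : ℝ) + 1)

/-- `G` is an optimal guessing function for `p`. -/
def IsOptimal {n : ℕ} (p : Fin n → ℝ) (G : Equiv.Perm (Fin n)) : Prop :=
  ∀ H : Equiv.Perm (Fin n), guesswork p G ≤ guesswork p H

/-- The expected cost `Δ_p(G₁, G₂) = Σ_i p_i (G₂(i) − G₁(i))`. -/
noncomputable def Delta {n : ℕ} (p : Fin n → ℝ) (G1 G2 : Equiv.Perm (Fin n)) : ℝ :=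
  ∑ i, p i * (((G2 i : ℕ) : ℝ) - ((G1 i : ℕ) : ℝ))

/-- The probability-weighted Kendall tau signed divergence
`K_p(σ₁,σ₂) = Σ_{(i,j): σ₁(i)<σ₁(j)} (p_i − p_j) · 1{σ₂(i) > σ₂(j)}`. -/
noncomputable def Kdiv {n : ℕ} (p : Fin n → ℝ) (σ1 σ2 : Equiv.Perm (Fin n)) : ℝ :=
  ∑ i, ∑ j, if σ1 i < σ1 j ∧ σ2 j < σ2 i then p i - p j else 0

/-- The expected cost of guesswork under mismatch
`δ(p,q) = min_{G_q ∈ 𝒢_q} Δ_p(G_p, G_q)` (as an infimum over the, finite and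
nonempty, set of values attained by optimal guessing functions for `q`). -/
noncomputable def mismatchCost {n : ℕ} (p q : Fin n → ℝ)
    (Gp : Equiv.Perm (Fin n)) : ℝ :=
  sInf {x | ∃ Gq : Equiv.Perm (Fin n), IsOptimal q Gq ∧ x = Delta p Gp Gq}

/-- The total variation distance `d_TV(p,q) = (1/2) Σ_i |p_i − q_i|`. -/
noncomputable def dTV {n : ℕ} (p q : Fin n → ℝ) : ℝ :=
  (1/2) * ∑ i, |p i - q i|

/-- `τ` is an adjacent transposition: it exchanges two consecutive elements
`j` and `j+1` and fixes everything else. -/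
def IsAdjTransposition {n : ℕ} (τ : Equiv.Perm (Fin n)) : Prop :=
  ∃ j k : Fin n, (j : ℕ) + 1 = (k : ℕ) ∧ τ = Equiv.swap j k

/-- `M` is a set of disjoint pairs: each pair has distinct entries, and each
element of `[n]` occurs in at most one pair of `M`. -/
def DisjointPairs {n : ℕ} (M : Finset (Fin n × Fin n)) : Prop :=
  (∀ m ∈ M, m.1 ≠ m.2) ∧
  ∀ k : Fin n, ∀ m1 ∈ M, ∀ m2 ∈ M,
    (k = m1.1 ∨ k = m1.2) → (k = m2.1 ∨ k = m2.2) → m1 = m2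


lemma fin_val_eq_sum {n : ℕ} (G : Equiv.Perm (Fin n)) (i : Fin n) :
    ((G i : ℕ) : ℝ) = ∑ j, if G j < G i then (1:ℝ) else 0 := by
  rw [Equiv.sum_comp G (fun k => if k < G i then (1:ℝ) else 0)]
  rw [Finset.sum_boole]
  norm_num
  congr 1
  rw [show Finset.filter (fun k => k < G i) Finset.univ = Finset.Iio (G i) by
    ext k; simp]
  simp [Fin.card_Iio]

lemma delta_eq_kdiv {n : ℕ} (p : Fin n → ℝ) (G1 G2 : Equiv.Perm (Fin n)) :
    Delta p G1 G2 = Kdiv p G1 G2 := by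
  set g : Fin n → Fin n → ℝ := fun i j =>
    p i * ((if G2 j < G2 i then (1:ℝ) else 0) - (if G1 j < G1 i then (1:ℝ) else 0)) -
      (if G1 i < G1 j ∧ G2 j < G2 i then p i - p j else 0) with hg
  have hanti : ∀ i j, g i j + g j i = 0 := by
    intro i j
    by_cases hij : i = j
    · subst hij; simp [hg]
    · have h1 : G1 i ≠ G1 j := fun h => hij (G1.injective h)
      have h2 : G2 i ≠ G2 j := fun h => hij (G2.injective h)
      rcases h1.lt_or_gt with ha | ha <;> rcases h2.lt_or_gt with hb | hb <;>
        simp [hg, ha, hb, ha.not_gt, hb.not_gt, ha.ne, hb.ne, ha.ne', hb.ne'] <;> ring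
  have hsum0 : ∑ i, ∑ j, g i j = 0 := by
    have hc : ∑ i, ∑ j, g j i = ∑ i, ∑ j, g i j := Finset.sum_comm
    have : (∑ i, ∑ j, g i j) + (∑ i, ∑ j, g j i) = 0 := by
      rw [← Finset.sum_add_distrib]
      simp_rw [← Finset.sum_add_distrib]
      simp [hanti]
    linarith [this, hc]
  have hdelta : Delta p G1 G2 - Kdiv p G1 G2 = ∑ i, ∑ j, g i j := by
    unfold Delta Kdiv
    rw [← Finset.sum_sub_distrib]
    congr 1; ext i
    rw [fin_val_eq_sum G2 i, fin_val_eq_sum G1 i, ← Finset.sum_sub_distrib,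
      Finset.mul_sum, ← Finset.sum_sub_distrib]
  linarith [hdelta, hsum0]

/-- `δ(p,q) ≤ Σ_{(i,j): p_i > p_j} (p_i − p_j)`, equivalently
`δ(p,q) ≤ (1/2) Σ_i Σ_j |p_i − p_j|`. -/
theorem mismatchCost_le_sum {n : ℕ} (p q : Fin n → ℝ)
    (hp : IsDist p) (hq : IsDist q)
    (Gp : Equiv.Perm (Fin n)) (hGp : IsOptimal p Gp) :
    mismatchCost p q Gp ≤ (∑ i, ∑ j, if p j < p i then p i - p j else 0) ∧
      mismatchCost p q Gp ≤ (1/2) * ∑ i, ∑ j, |p i - p j| := by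
  obtain ⟨Gq, -, hGqmin⟩ := Finset.exists_min_image (Finset.univ : Finset (Equiv.Perm (Fin n)))
    (guesswork q) Finset.univ_nonempty
  have hopt : IsOptimal q Gq := fun H => hGqmin H (Finset.mem_univ H)
  have hbdd : BddBelow {x | ∃ Gq : Equiv.Perm (Fin n), IsOptimal q Gq ∧ x = Delta p Gp Gq} :=
    Set.Finite.bddBelow ((Set.finite_range (Delta p Gp)).subset (by
      rintro x ⟨G, -, rfl⟩; exact ⟨G, rfl⟩))
  have h1 : mismatchCost p q Gp ≤ Delta p Gp Gq := csInf_le hbdd ⟨Gq, hopt, rfl⟩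
  have h2 : Delta p Gp Gq ≤ ∑ i, ∑ j, if p j < p i then p i - p j else 0 := by
    rw [delta_eq_kdiv]
    unfold Kdiv
    refine Finset.sum_le_sum fun i _ => Finset.sum_le_sum fun j _ => ?_
    split_ifs with h h' h' <;> first | rfl | linarith [h'] | linarith | positivity
  have heq : (∑ i, ∑ j, if p j < p i then p i - p j else 0)
      = (1/2) * ∑ i, ∑ j, |p i - p j| := by
    have habs : ∑ i, ∑ j, |p i - p j|
        = ∑ i, ∑ j, ((if p j < p i then p i - p j else 0) + (if p i < p j then p j - p i else 0)) := by
      refine Finset.sum_congr rfl fun i _ => Finset.sum_congr rfl fun j _ => ?_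
      rcases lt_trichotomy (p i) (p j) with h | h | h <;>
        simp [h, h.le, abs_of_nonneg, abs_of_nonpos, not_lt_of_gt, le_of_lt] <;>
        first
          | rw [abs_of_nonpos (by linarith)]; simp [not_lt_of_gt h, h]; ring
          | rw [abs_of_nonneg (by linarith)]; simp [not_lt_of_gt h, h]
    have hswap : ∑ i, ∑ j, (if p i < p j then p j - p i else 0)
        = ∑ i, ∑ j, (if p j < p i then p i - p j else 0) := Finset.sum_comm
    simp_rw [Finset.sum_add_distrib] at habs
    rw [habs, hswap]; ring
  exact ⟨h1.trans h2, by rw [← heq]; exact h1.trans h2⟩
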